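/- If an arrangement (ι,κ) is globally adequate, then no doctor d has interview capacity κ_d with 1 < κ_d < min{|D|,|H|}, and no hospital h has interview capacity ι_h with 1 < ι_h < min{|D|,|H|}. -/

import Mathlib

/- Formal model of the two-step interview-then-match process of
Echenique-et-al-style markets: Step 1 computes the interview matching by
hospital-proposing deferred acceptance (with responsive, capacity-constrained
choice functions); Step 2 computes the final one-to-one matching by
doctor-proposing deferred acceptance on preferences restricted to interview
partners. -/

open Finset

section Model

variable {D H : Type*} [Fintype D] [Fintype H] [DecidableEq D] [DecidableEq H]

/-- The (at most) `n` best elements of `s` according to `rank` (lower rank = better). -/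
def topN {α : Type*} [DecidableEq α] (rank : α → ℕ) (n : ℕ) (s : Finset α) : Finset α :=
  s.filter fun x => (s.filter fun y => rank y < rank x).card < n

/-- A market: strict preferences represented by rank functions
(lower rank = more preferred) together with acceptability predicates. -/
structure Market (D H : Type*) where
  rankDH : D → H → ℕ
  accD : D → H → Bool
  rankHD : H → D → ℕ
  accH : H → D → Bool

/-- Strict preferences: rank functions are injective. -/
def Market.Strict (M : Market D H) : Prop :=
  (∀ d, Function.Injective (M.rankDH d)) ∧ (∀ h, Function.Injective (M.rankHD h))

/-- Hospital `h` proposes to its `ι h` best acceptable doctors that have not rejected it. -/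
def hProps (M : Market D H) (ι : H → ℕ) (R : Finset (H × D)) (h : H) : Finset D :=
  topN (M.rankHD h) (ι h) (univ.filter fun d => M.accH h d ∧ (h, d) ∉ R)

/-- Doctor `d` keeps her `κ d` best acceptable proposals. -/
def dKeeps (M : Market D H) (ι : H → ℕ) (κ : D → ℕ) (R : Finset (H × D)) (d : D) :
    Finset H :=
  topN (fun h => M.rankDH d h) (κ d) (univ.filter fun h => M.accD d h ∧ d ∈ hProps M ι R h)

/-- One round of hospital-proposing deferred acceptance: the (cumulative) rejection set
grows by the proposals not kept. -/
def iStep (M : Market D H) (ι : H → ℕ) (κ : D → ℕ) (R : Finset (H × D)) :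
    Finset (H × D) :=
  R ∪ univ.filter fun p : H × D => p.2 ∈ hProps M ι R p.1 ∧ p.1 ∉ dKeeps M ι κ R p.2

/-- Rejection set at the end of hospital-proposing DA (interview step). -/
def iRej (M : Market D H) (ι : H → ℕ) (κ : D → ℕ) : Finset (H × D) :=
  (iStep M ι κ)^[Fintype.card D * Fintype.card H] ∅

/-- The interview matching (the hospital-optimal stable many-to-many matching) computed
by hospital-proposing deferred acceptance: pairs `(h, d)` such that `h` interviews `d`. -/
def interviews (M : Market D H) (ι : H → ℕ) (κ : D → ℕ) : Finset (H × D) :=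
  univ.filter fun p : H × D =>
    p.2 ∈ hProps M ι (iRej M ι κ) p.1 ∧ p.1 ∈ dKeeps M ι κ (iRej M ι κ) p.2

/-- Doctor `d` proposes to her best interview partner that has not rejected her. -/
def dProps (M : Market D H) (V : Finset (H × D)) (S : Finset (D × H)) (d : D) :
    Finset H :=
  topN (M.rankDH d) 1 (univ.filter fun h => (h, d) ∈ V ∧ (d, h) ∉ S)

/-- Hospital `h` keeps its best proposal. -/
def hKeeps (M : Market D H) (V : Finset (H × D)) (S : Finset (D × H)) (h : H) :
    Finset D :=
  topN (M.rankHD h) 1 (univ.filter fun d => h ∈ dProps M V S d)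

/-- One round of doctor-proposing DA on preferences restricted to the interview matching `V`. -/
def mStep (M : Market D H) (V : Finset (H × D)) (S : Finset (D × H)) : Finset (D × H) :=
  S ∪ univ.filter fun p : D × H => p.2 ∈ dProps M V S p.1 ∧ p.1 ∉ hKeeps M V S p.2

/-- Rejection set at the end of the doctor-proposing DA of the matching step. -/
def mRej (M : Market D H) (V : Finset (H × D)) : Finset (D × H) :=
  (mStep M V)^[Fintype.card D * Fintype.card H] ∅

/-- The final matching: doctor-proposing DA on preferences restricted to interviews `V`. -/
def finalMatch (M : Market D H) (V : Finset (H × D)) : Finset (D × H) :=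
  univ.filter fun p : D × H =>
    p.2 ∈ dProps M V (mRej M V) p.1 ∧ p.1 ∈ hKeeps M V (mRej M V) p.2

/-- The `(ι,κ)`-matching: the culmination of the two-step process. -/
def ikMatching (M : Market D H) (ι : H → ℕ) (κ : D → ℕ) : Finset (D × H) :=
  finalMatch M (interviews M ι κ)

/-- `(d, h)` is a blocking pair of `μ` (w.r.t. the true, unrestricted preferences). -/
def Blocks (M : Market D H) (μ : Finset (D × H)) (d : D) (h : H) : Prop :=
  M.accD d h ∧ M.accH h d ∧ (d, h) ∉ μ ∧
    (∀ h', (d, h') ∈ μ → M.rankDH d h < M.rankDH d h') ∧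
    (∀ d', (d', h) ∈ μ → M.rankHD h d < M.rankHD h d')

instance (M : Market D H) (μ : Finset (D × H)) (d : D) (h : H) :
    Decidable (Blocks M μ d h) := by
  unfold Blocks; infer_instance

/-- A matching is stable if it admits no blocking pair. -/
def Stable (M : Market D H) (μ : Finset (D × H)) : Prop := ∀ d h, ¬ Blocks M μ d h

/-- `(ι,κ)` is adequate at `M` if the `(ι,κ)`-matching is stable. -/
def Adequate (M : Market D H) (ι : H → ℕ) (κ : D → ℕ) : Prop :=
  Stable M (ikMatching M ι κ)

/-- One-to-one matching (as a set of pairs). -/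
def IsMatching (μ : Finset (D × H)) : Prop :=
  (∀ d h h', (d, h) ∈ μ → (d, h') ∈ μ → h = h') ∧
    (∀ d d' h, (d, h) ∈ μ → (d', h) ∈ μ → d = d')

/-- Common preferences: all doctors rank the hospitals identically, all hospitals rank
the doctors identically, everyone is mutually acceptable (and preferences are strict). -/
def CommonPrefs (M : Market D H) : Prop :=
  M.Strict ∧ (∀ d d', M.rankDH d = M.rankDH d') ∧ (∀ h h', M.rankHD h = M.rankHD h') ∧
    ∀ d h, M.accD d h ∧ M.accH h d

/-- Number of hospitals matched under `μ`. -/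
def matchedHospitals (μ : Finset (D × H)) : ℕ :=
  (univ.filter fun h : H => ∃ d, (d, h) ∈ μ).card

/-- Number of blocking pairs of `μ`. -/
def blockingCount (M : Market D H) (μ : Finset (D × H)) : ℕ :=
  (univ.filter fun p : D × H => Blocks M μ p.1 p.2).card

end Model

/-- `(ι,κ)` is globally adequate: adequate at every (strict) preference profile. -/
def GloballyAdequate (D H : Type*) [Fintype D] [Fintype H] [DecidableEq D] [DecidableEq H]
    (ι : H → ℕ) (κ : D → ℕ) : Prop :=
  ∀ M : Market D H, M.Strict → Adequate M ι κ

variable {D H : Type*} [Fintype D] [Fintype H] [DecidableEq D] [DecidableEq H]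

/-
Each forbidden capacity is refuted by an explicit strict market in which some mutually
acceptable doctor and hospital both end up unmatched, and so block. A capacity `0` is refuted
by a market with a single acceptable pair. For a doctor `d₀` with `1 < κ d₀ < min |D| |H|`:
either two hospitals have capacity `1`, and one of them wastes its only interview on `d₀`, who
then matches elsewhere; or all hospitals but one, `h₀`, interview at least two doctors, and
`κ d₀` of them fill the interview slots of `d₀`, so that `d₀` turns `h₀` down, only to drop
`d₀` in the match step for private favourites. Hospitals are handled dually.

Deferred acceptance is never run to its end: every fact needed about the two steps comes from
a proposal that is kept at every round, and so is never rejected, together with a count of the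
better-ranked available partners in the last round.
-/

section TopN

variable {α : Type*} [DecidableEq α] {rank : α → ℕ} {n : ℕ} {s T : Finset α} {x : α}

theorem mem_topN : x ∈ topN rank n s ↔ x ∈ s ∧ #{y ∈ s | rank y < rank x} < n := by
  simp [topN]

theorem mem_topN_of_better_subset (hx : x ∈ s) (hT : ∀ y ∈ s, rank y < rank x → y ∈ T)
    (hn : #T < n) : x ∈ topN rank n s :=
  mem_topN.2 ⟨hx, (card_le_card fun y hy => (mem_filter.1 hy).elim (hT y)).trans_lt hn⟩

theorem mem_topN_of_subset_of_card_le (hx : x ∈ s) (hs : s ⊆ T) (hn : #T ≤ n) :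
    x ∈ topN rank n s :=
  mem_topN_of_better_subset hx (T := T.erase x)
    (fun _ hy hlt => mem_erase.2 ⟨fun h => hlt.ne (congrArg rank h), hs hy⟩)
    ((card_erase_lt_of_mem (hs hx)).trans_le hn)

theorem notMem_topN_of_better (hT : ∀ y ∈ T, y ∈ s ∧ rank y < rank x) (hn : n ≤ #T) :
    x ∉ topN rank n s := fun hx =>
  (mem_topN.1 hx).2.not_ge (hn.trans (card_le_card fun y hy => mem_filter.2 (hT y hy)))

theorem mem_topN_one : x ∈ topN rank 1 s ↔ x ∈ s ∧ ∀ y ∈ s, ¬ rank y < rank x := by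
  simp [mem_topN, filter_eq_empty_iff]

end TopN

section HospitalProposals

variable {D H : Type*} [Fintype D] [DecidableEq D] [DecidableEq H] {M : Market D H}
  {ι : H → ℕ} {R : Finset (H × D)} {T : Finset D} {d : D} {h : H}

theorem acc_of_mem_hProps (hd : d ∈ hProps M ι R h) : M.accH h d ∧ (h, d) ∉ R := by
  simpa [hProps] using (mem_topN.1 hd).1

theorem mem_hProps_of_card_le (hacc : M.accH h d) (hR : (h, d) ∉ R)
    (hT : ∀ d', M.accH h d' → d' ∈ T) (hn : #T ≤ ι h) : d ∈ hProps M ι R h :=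
  mem_topN_of_subset_of_card_le (by simp [hacc, hR]) (fun d' hd' => hT d' (mem_filter.1 hd').2.1)
    hn

theorem notMem_hProps_of_better (hacc : ∀ d' ∈ T, M.accH h d')
    (hR : ∀ d' ∈ T, (h, d') ∉ R)
    (hlt : ∀ d' ∈ T, M.rankHD h d' < M.rankHD h d) (hn : ι h ≤ #T) : d ∉ hProps M ι R h :=
  notMem_topN_of_better (fun d' hd' => ⟨by simp [hacc d' hd', hR d' hd'], hlt d' hd'⟩) hn

end HospitalProposals

section Interviews

variable {M : Market D H} {ι : H → ℕ} {κ : D → ℕ} {R : Finset (H × D)} {T' : Finset H}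
  {d : D} {h : H}

theorem acc_of_mem_dKeeps (hh : h ∈ dKeeps M ι κ R d) :
    M.accD d h ∧ d ∈ hProps M ι R h := by
  simpa [dKeeps] using (mem_topN.1 hh).1

theorem mem_dKeeps_of_better_subset (hacc : M.accD d h) (hp : d ∈ hProps M ι R h)
    (hT : ∀ h', M.accD d h' → M.rankDH d h' < M.rankDH d h → h' ∈ T') (hn : #T' < κ d) :
    h ∈ dKeeps M ι κ R d :=
  mem_topN_of_better_subset (by simp [hacc, hp]) (fun h' hh' => hT h' (mem_filter.1 hh').2.1)
    hn

theorem mem_dKeeps_of_card_le (hacc : M.accD d h) (hp : d ∈ hProps M ι R h)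
    (hT : ∀ h', M.accD d h' → h' ∈ T') (hn : #T' ≤ κ d) : h ∈ dKeeps M ι κ R d :=
  mem_topN_of_subset_of_card_le (by simp [hacc, hp]) (fun h' hh' => hT h' (mem_filter.1 hh').2.1)
    hn

theorem notMem_dKeeps_of_better (hacc : ∀ h' ∈ T', M.accD d h')
    (hp : ∀ h' ∈ T', d ∈ hProps M ι R h') (hlt : ∀ h' ∈ T', M.rankDH d h' < M.rankDH d h)
    (hn : κ d ≤ #T') : h ∉ dKeeps M ι κ R d :=
  notMem_topN_of_better (fun h' hh' => ⟨by simp [hacc h' hh', hp h' hh'], hlt h' hh'⟩) hn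

theorem notMem_iRej_of_forall_kept
    (hkept : ∀ R, d ∈ hProps M ι R h → h ∈ dKeeps M ι κ R d) : (h, d) ∉ iRej M ι κ := by
  refine Function.Iterate.rec (fun R => (h, d) ∉ R) (notMem_empty _) (fun R hR hmem => ?_) _
  simp only [iStep, mem_union, mem_filter, mem_univ, true_and] at hmem
  rcases hmem with hmem | ⟨hp, hk⟩
  exacts [hR hmem, hk (hkept R hp)]

theorem mem_interviews : (h, d) ∈ interviews M ι κ ↔
    d ∈ hProps M ι (iRej M ι κ) h ∧ h ∈ dKeeps M ι κ (iRej M ι κ) d := by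
  simp [interviews]

end Interviews

section DoctorProposals

variable {D H : Type*} [Fintype H] [DecidableEq D] [DecidableEq H] {M : Market D H}
  {V : Finset (H × D)} {S : Finset (D × H)} {d : D} {h h' : H}

theorem mem_of_mem_dProps (hh : h ∈ dProps M V S d) : (h, d) ∈ V ∧ (d, h) ∉ S := by
  simpa [dProps] using (mem_topN.1 hh).1

theorem mem_dProps_of_forall_not_lt (hV : (h, d) ∈ V) (hS : (d, h) ∉ S)
    (hbest : ∀ h', (h', d) ∈ V → ¬ M.rankDH d h' < M.rankDH d h) : h ∈ dProps M V S d :=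
  mem_topN_one.2 ⟨by simp [hV, hS], fun h' hh' => hbest h' (mem_filter.1 hh').2.1⟩

theorem notMem_dProps_of_lt (hV : (h', d) ∈ V) (hS : (d, h') ∉ S)
    (hlt : M.rankDH d h' < M.rankDH d h) : h ∉ dProps M V S d := fun hh =>
  (mem_topN_one.1 hh).2 h' (by simp [hV, hS]) hlt

end DoctorProposals

section FinalMatch

variable {M : Market D H} {V : Finset (H × D)} {S : Finset (D × H)} {d d' : D} {h h' : H}

theorem mem_hKeeps_of_forall_not_lt (hp : h ∈ dProps M V S d)
    (hbest : ∀ d', (h, d') ∈ V → ¬ M.rankHD h d' < M.rankHD h d) : d ∈ hKeeps M V S h :=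
  mem_topN_one.2 ⟨by simpa using hp, fun d' hd' =>
    hbest d' (mem_of_mem_dProps (mem_filter.1 hd').2).1⟩

theorem notMem_hKeeps_of_lt (hp : h ∈ dProps M V S d') (hlt : M.rankHD h d' < M.rankHD h d) :
    d ∉ hKeeps M V S h := fun hd =>
  (mem_topN_one.1 hd).2 d' (by simpa using hp) hlt

theorem notMem_mRej_of_forall_kept (hkept : ∀ S, h ∈ dProps M V S d → d ∈ hKeeps M V S h) :
    (d, h) ∉ mRej M V := by
  refine Function.Iterate.rec (fun S => (d, h) ∉ S) (notMem_empty _) (fun S hS hmem => ?_) _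
  simp only [mStep, mem_union, mem_filter, mem_univ, true_and] at hmem
  rcases hmem with hmem | ⟨hp, hk⟩
  exacts [hS hmem, hk (hkept S hp)]

theorem mem_finalMatch : (d, h) ∈ finalMatch M V ↔
    h ∈ dProps M V (mRej M V) d ∧ d ∈ hKeeps M V (mRej M V) h := by
  simp [finalMatch]

end FinalMatch

section Adequacy

variable {M : Market D H} {ι : H → ℕ} {κ : D → ℕ} {d : D} {h : H}

theorem mem_ikMatching : (d, h) ∈ ikMatching M ι κ ↔
    h ∈ dProps M (interviews M ι κ) (mRej M (interviews M ι κ)) d ∧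
      d ∈ hKeeps M (interviews M ι κ) (mRej M (interviews M ι κ)) h :=
  mem_finalMatch

theorem mem_interviews_of_mem_ikMatching (hμ : (d, h) ∈ ikMatching M ι κ) :
    (h, d) ∈ interviews M ι κ :=
  (mem_of_mem_dProps (mem_ikMatching.1 hμ).1).1

theorem not_adequate_of_unmatched (hd : M.accD d h) (hh : M.accH h d)
    (hdμ : ∀ h', (d, h') ∉ ikMatching M ι κ) (hhμ : ∀ d', (d', h) ∉ ikMatching M ι κ) :
    ¬ Adequate M ι κ := fun had =>
  had d h ⟨hd, hh, hdμ h, fun h' hμ => (hdμ h' hμ).elim, fun d' hμ => (hhμ d' hμ).elim⟩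

end Adequacy

section LastRank

variable {α : Type*} [Fintype α] [DecidableEq α] {a x : α}

noncomputable def lastRank (a x : α) : ℕ :=
  if x = a then Fintype.card α else Fintype.equivFin α x

theorem lastRank_lt (hx : x ≠ a) : lastRank a x < lastRank a a := by
  simp [lastRank, hx]

theorem not_lastRank_self_lt : ¬ lastRank a a < lastRank a x := by
  rcases eq_or_ne x a with rfl | hx
  · exact lt_irrefl _
  · exact (lastRank_lt hx).not_gt

theorem lastRank_injective (a : α) : Function.Injective (lastRank a) := by
  intro x y hxy
  by_cases hx : x = a <;> by_cases hy : y = a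
  · rw [hx, hy]
  · subst hx; exact absurd hxy (lastRank_lt hy).ne'
  · subst hy; exact absurd hxy (lastRank_lt hx).ne
  · simpa [lastRank, hx, hy, Fin.val_inj] using hxy

end LastRank

open Classical in
/-- Acceptability is the relation `A`, on both sides; every doctor ranks `hLast` last and every
hospital ranks `dLast` last, all other comparisons being arbitrary. -/
noncomputable def Market.ofRel (A : D → H → Prop) (hLast : H) (dLast : D) : Market D H where
  rankDH _ := lastRank hLast
  accD d h := decide (A d h)
  rankHD _ := lastRank dLast
  accH h d := decide (A d h)

namespace Market

variable {A : D → H → Prop} {hLast : H} {dLast : D} {d : D} {h : H}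

@[simp] theorem ofRel_accD : (ofRel A hLast dLast).accD d h ↔ A d h := by simp [ofRel]

@[simp] theorem ofRel_accH : (ofRel A hLast dLast).accH h d ↔ A d h := by simp [ofRel]

@[simp] theorem ofRel_rankDH : (ofRel A hLast dLast).rankDH d = lastRank hLast := rfl

@[simp] theorem ofRel_rankHD : (ofRel A hLast dLast).rankHD h = lastRank dLast := rfl

theorem ofRel_strict : (ofRel A hLast dLast).Strict :=
  ⟨fun _ => lastRank_injective hLast, fun _ => lastRank_injective dLast⟩

end Market

section OfRel

variable {ι : H → ℕ} {κ : D → ℕ} {A : D → H → Prop} {hLast : H} {dLast : D} {d : D}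
  {h : H}

theorem rel_of_mem_interviews (hV : (h, d) ∈ interviews (Market.ofRel A hLast dLast) ι κ) :
    A d h := by
  simpa using (acc_of_mem_dKeeps (mem_interviews.1 hV).2).1

theorem rel_of_mem_ikMatching (hμ : (d, h) ∈ ikMatching (Market.ofRel A hLast dLast) ι κ) :
    A d h :=
  rel_of_mem_interviews (mem_interviews_of_mem_ikMatching hμ)

end OfRel

section Counterexamples

variable {ι : H → ℕ} {κ : D → ℕ}

theorem not_adequate_of_capacity_eq_zero {d₀ : D} {h₀ : H} (hz : ι h₀ = 0 ∨ κ d₀ = 0) :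
    ¬ Adequate (Market.ofRel (fun d h => d = d₀ ∧ h = h₀) h₀ d₀) ι κ := by
  have hV : (h₀, d₀) ∉ interviews (Market.ofRel (fun d h => d = d₀ ∧ h = h₀) h₀ d₀) ι κ := by
    rcases hz with hz | hz <;> simp [mem_interviews, hProps, dKeeps, mem_topN, hz]
  refine not_adequate_of_unmatched (d := d₀) (h := h₀) (by simp) (by simp) ?_ ?_
  · intro h hμ
    obtain ⟨-, rfl⟩ := rel_of_mem_ikMatching hμ
    exact hV (mem_interviews_of_mem_ikMatching hμ)
  · intro d hμ
    obtain ⟨rfl, -⟩ := rel_of_mem_ikMatching hμ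
    exact hV (mem_interviews_of_mem_ikMatching hμ)

/- `u` spends its only interview on `d₀` rather than on `e`; `d₀` interviews at both `u` and
`v` and takes `v`, which leaves `e` and `u` unmatched. -/
theorem not_adequate_of_two_unit_hospitals {d₀ e : D} {u v : H} (hde : e ≠ d₀) (huv : u ≠ v)
    (hκ : 2 ≤ κ d₀) (hu : ι u = 1) (hv : 1 ≤ ι v) :
    ¬ Adequate
      (Market.ofRel (fun d h => (d = d₀ ∧ (h = u ∨ h = v)) ∨ (d = e ∧ h = u)) u e) ι κ := by
  set M := Market.ofRel (fun d h => (d = d₀ ∧ (h = u ∨ h = v)) ∨ (d = e ∧ h = u)) u e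
    with hM
  have hkeep : ∀ R h, d₀ ∈ hProps M ι R h → h ∈ dKeeps M ι κ R d₀ := fun R h hp =>
    mem_dKeeps_of_card_le (T' := {u, v}) (by simpa [hM] using (acc_of_mem_hProps hp).1) hp
      (by simp [hM, hde.symm]) (card_le_two.trans hκ)
  have hRu : (u, d₀) ∉ iRej M ι κ := notMem_iRej_of_forall_kept (hkeep · u)
  have hRv : (v, d₀) ∉ iRej M ι κ := notMem_iRej_of_forall_kept (hkeep · v)
  have hVe : (u, e) ∉ interviews M ι κ := fun hV =>
    notMem_hProps_of_better (T := {d₀}) (by simp [hM]) (by simpa using hRu)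
      (by simp [hM, lastRank_lt hde.symm]) (by simp [hu]) (mem_interviews.1 hV).1
  have hVv : (v, d₀) ∈ interviews M ι κ := by
    have hp : d₀ ∈ hProps M ι (iRej M ι κ) v :=
      mem_hProps_of_card_le (T := {d₀}) (by simp [hM]) hRv (by simp [hM, huv.symm])
        (by simpa using hv)
    exact mem_interviews.2 ⟨hp, hkeep _ _ hp⟩
  have hSv : (d₀, v) ∉ mRej M (interviews M ι κ) := notMem_mRej_of_forall_kept fun S hp =>
    mem_hKeeps_of_forall_not_lt hp fun d' hd' => by
      obtain rfl : d' = d₀ := by simpa [huv.symm] using rel_of_mem_interviews hd'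
      exact lt_irrefl _
  have hμu : (d₀, u) ∉ ikMatching M ι κ := fun hμ =>
    notMem_dProps_of_lt hVv hSv (by simp [hM, lastRank_lt huv.symm]) (mem_ikMatching.1 hμ).1
  refine not_adequate_of_unmatched (d := e) (h := u) (by simp [hM]) (by simp [hM]) ?_ ?_
  · intro h hμ
    obtain rfl : h = u := by simpa [hde] using rel_of_mem_ikMatching hμ
    exact hVe (mem_interviews_of_mem_ikMatching hμ)
  · intro d hμ
    obtain rfl | rfl : d = d₀ ∨ d = e := by simpa using rel_of_mem_ikMatching hμ
    exacts [hμu hμ, hVe (mem_interviews_of_mem_ikMatching hμ)]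

/- `u` keeps the interview with `h₀` and turns `e` down; in the match step `h₀` prefers `v`,
which leaves `u` and `e` unmatched. -/
theorem not_adequate_of_two_unit_doctors {h₀ e : H} {u v : D} (he : e ≠ h₀) (huv : u ≠ v)
    (hι : 2 ≤ ι h₀) (hu : κ u = 1) (hv : 1 ≤ κ v) :
    ¬ Adequate
      (Market.ofRel (fun d h => (h = h₀ ∧ (d = u ∨ d = v)) ∨ (d = u ∧ h = e)) e u) ι κ := by
  set M := Market.ofRel (fun d h => (h = h₀ ∧ (d = u ∨ d = v)) ∨ (d = u ∧ h = e)) e u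
    with hM
  have hkeep : ∀ R d, d ∈ hProps M ι R h₀ → h₀ ∈ dKeeps M ι κ R d := by
    intro R d hp
    have hacc : M.accD d h₀ := by simpa [hM] using (acc_of_mem_hProps hp).1
    obtain rfl | rfl : d = u ∨ d = v := by simpa [hM, he.symm] using hacc
    · refine mem_dKeeps_of_better_subset (T' := ∅) hacc hp (fun h' hh' hlt => ?_) (by simp [hu])
      obtain rfl | rfl : h' = h₀ ∨ h' = e := by simpa [hM, or_comm] using hh'
      exacts [(lt_irrefl _ hlt).elim, (not_lastRank_self_lt (by simpa [hM] using hlt)).elim]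
    · exact mem_dKeeps_of_card_le (T' := {h₀}) hacc hp (by simp [hM, huv.symm])
        (by simpa using hv)
  have hprop : ∀ d, M.accH h₀ d → d ∈ hProps M ι (iRej M ι κ) h₀ := fun d hacc =>
    mem_hProps_of_card_le (T := {u, v}) hacc (notMem_iRej_of_forall_kept (hkeep · d))
      (by simp [hM, he.symm]) (card_le_two.trans hι)
  have hVe : (e, u) ∉ interviews M ι κ := fun hV =>
    notMem_dKeeps_of_better (T' := {h₀}) (by simp [hM]) (by simpa using hprop u (by simp [hM]))
      (by simp [hM, lastRank_lt he.symm]) (by simp [hu]) (mem_interviews.1 hV).2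
  have hVv : (h₀, v) ∈ interviews M ι κ := by
    have hp := hprop v (by simp [hM])
    exact mem_interviews.2 ⟨hp, hkeep _ _ hp⟩
  have hSv : (v, h₀) ∉ mRej M (interviews M ι κ) := notMem_mRej_of_forall_kept fun S hp =>
    mem_hKeeps_of_forall_not_lt hp fun d' hd' hlt => by
      obtain rfl | rfl : d' = u ∨ d' = v := by simpa [he.symm] using rel_of_mem_interviews hd'
      exacts [not_lastRank_self_lt (by simpa [hM] using hlt), lt_irrefl _ hlt]
  have hpv : h₀ ∈ dProps M (interviews M ι κ) (mRej M (interviews M ι κ)) v :=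
    mem_dProps_of_forall_not_lt hVv hSv fun h' hh' => by
      obtain rfl : h' = h₀ := by simpa [huv.symm] using rel_of_mem_interviews hh'
      exact lt_irrefl _
  have hμu : (u, h₀) ∉ ikMatching M ι κ := fun hμ =>
    notMem_hKeeps_of_lt hpv (by simp [hM, lastRank_lt huv.symm]) (mem_ikMatching.1 hμ).2
  refine not_adequate_of_unmatched (d := u) (h := e) (by simp [hM]) (by simp [hM]) ?_ ?_
  · intro h hμ
    obtain rfl | rfl : h = h₀ ∨ h = e := by simpa [or_comm] using rel_of_mem_ikMatching hμ
    exacts [hμu hμ, hVe (mem_interviews_of_mem_ikMatching hμ)]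
  · intro d hμ
    obtain rfl : d = u := by simpa [he] using rel_of_mem_ikMatching hμ
    exact hVe (mem_interviews_of_mem_ikMatching hμ)

/- The hospitals `G j` fill all `κ d₀` interview slots of `d₀`, so `d₀` turns `h₀` down; in the
match step each `G j` holds its own favourite `E j` against `d₀`, so `d₀` and `h₀` stay
unmatched. -/
theorem not_adequate_of_wide_hospitals {d₀ : D} {h₀ : H} (G : Fin (κ d₀) ↪ H)
    (E : Fin (κ d₀) ↪ D) (hG : ∀ j, G j ≠ h₀) (hE : ∀ j, E j ≠ d₀)
    (hιG : ∀ j, 2 ≤ ι (G j)) (hκE : ∀ j, 1 ≤ κ (E j)) :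
    ¬ Adequate (Market.ofRel (fun d h => (d = d₀ ∧ (h = h₀ ∨ ∃ j, h = G j)) ∨
      ∃ j, d = E j ∧ h = G j) h₀ d₀) ι κ := by
  set M := Market.ofRel (fun d h => (d = d₀ ∧ (h = h₀ ∨ ∃ j, h = G j)) ∨
    ∃ j, d = E j ∧ h = G j) h₀ d₀ with hM
  have hG' : ∀ j, h₀ ≠ G j := fun j => (hG j).symm
  have hE' : ∀ j, d₀ ≠ E j := fun j => (hE j).symm
  have hkeep : ∀ R j d, d ∈ hProps M ι R (G j) → G j ∈ dKeeps M ι κ R d := by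
    intro R j d hp
    have hacc : M.accD d (G j) := by simpa [hM] using (acc_of_mem_hProps hp).1
    obtain rfl | rfl : d = d₀ ∨ d = E j := by simpa [hM, hG] using hacc
    · refine mem_dKeeps_of_better_subset (T' := (univ.map G).erase (G j)) hacc hp
        (fun h' hh' hlt => ?_) ((card_erase_lt_of_mem (by simp)).trans_le (by simp))
      obtain rfl | ⟨i, rfl⟩ : h' = h₀ ∨ ∃ i, h' = G i := by simpa [hM, hE'] using hh'
      · exact (not_lastRank_self_lt (by simpa [hM] using hlt)).elim
      · exact mem_erase.2 ⟨fun h => hlt.ne (congrArg _ h), by simp⟩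
    · exact mem_dKeeps_of_card_le (T' := {G j}) hacc hp (by simp [hM, hE])
        (by simpa using hκE j)
  have hprop : ∀ j d, M.accH (G j) d → d ∈ hProps M ι (iRej M ι κ) (G j) := fun j d hacc =>
    mem_hProps_of_card_le (T := {d₀, E j}) hacc (notMem_iRej_of_forall_kept (hkeep · j d))
      (by simp [hM, hG]) (card_le_two.trans (hιG j))
  have hV₀ : (h₀, d₀) ∉ interviews M ι κ := fun hV =>
    notMem_dKeeps_of_better (T' := univ.map G) (by simp [hM])
      (by simpa using fun j => hprop j d₀ (by simp [hM]))
      (by simpa [hM] using fun j => lastRank_lt (hG j)) (by simp) (mem_interviews.1 hV).2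
  have hVE : ∀ j, (G j, E j) ∈ interviews M ι κ := fun j => by
    have hp := hprop j (E j) (by simp [hM])
    exact mem_interviews.2 ⟨hp, hkeep _ _ _ hp⟩
  have hSE : ∀ j, (E j, G j) ∉ mRej M (interviews M ι κ) := fun j =>
    notMem_mRej_of_forall_kept fun S hp => mem_hKeeps_of_forall_not_lt hp fun d' hd' hlt => by
      obtain rfl | rfl : d' = d₀ ∨ d' = E j := by
        simpa [hG, hG'] using rel_of_mem_interviews hd'
      exacts [not_lastRank_self_lt (by simpa [hM] using hlt), lt_irrefl _ hlt]
  have hpE : ∀ j, G j ∈ dProps M (interviews M ι κ) (mRej M (interviews M ι κ)) (E j) :=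
    fun j => mem_dProps_of_forall_not_lt (hVE j) (hSE j) fun h' hh' => by
      obtain rfl : h' = G j := by simpa [hE] using rel_of_mem_interviews hh'
      exact lt_irrefl _
  have hd₀ : ∀ h, (d₀, h) ∉ ikMatching M ι κ := by
    intro h hμ
    obtain rfl | ⟨j, rfl⟩ : h = h₀ ∨ ∃ j, h = G j := by
      simpa [hE'] using rel_of_mem_ikMatching hμ
    · exact hV₀ (mem_interviews_of_mem_ikMatching hμ)
    · exact notMem_hKeeps_of_lt (hpE j) (by simp [hM, lastRank_lt (hE j)])
        (mem_ikMatching.1 hμ).2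
  refine not_adequate_of_unmatched (d := d₀) (h := h₀) (by simp [hM]) (by simp [hM]) hd₀ ?_
  intro d hμ
  obtain rfl : d = d₀ := by simpa [hG'] using rel_of_mem_ikMatching hμ
  exact hd₀ _ hμ

/- `h₀` spends all `ι h₀` interviews on the doctors `E j`, who keep every offer, so `e` gets
no interview; in the match step each `E j` prefers its own `W j`, so `e` and `h₀` stay
unmatched. -/
theorem not_adequate_of_wide_doctors {h₀ : H} {e : D} (E : Fin (ι h₀) ↪ D)
    (W : Fin (ι h₀) ↪ H) (hE : ∀ j, E j ≠ e) (hW : ∀ j, W j ≠ h₀)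
    (hκE : ∀ j, 2 ≤ κ (E j)) (hιW : ∀ j, 1 ≤ ι (W j)) :
    ¬ Adequate (Market.ofRel (fun d h => (h = h₀ ∧ (d = e ∨ ∃ j, d = E j)) ∨
      ∃ j, d = E j ∧ h = W j) h₀ e) ι κ := by
  set M := Market.ofRel (fun d h => (h = h₀ ∧ (d = e ∨ ∃ j, d = E j)) ∨
    ∃ j, d = E j ∧ h = W j) h₀ e with hM
  have hW' : ∀ j, h₀ ≠ W j := fun j => (hW j).symm
  have hE' : ∀ j, e ≠ E j := fun j => (hE j).symm
  have hkeep : ∀ R j h, E j ∈ hProps M ι R h → h ∈ dKeeps M ι κ R (E j) :=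
    fun R j h hp =>
      mem_dKeeps_of_card_le (T' := {h₀, W j}) (by simpa [hM] using (acc_of_mem_hProps hp).1) hp
        (by simp [hM, hE]) (card_le_two.trans (hκE j))
  have hR : ∀ j h, (h, E j) ∉ iRej M ι κ := fun j h =>
    notMem_iRej_of_forall_kept (hkeep · j h)
  have hVe : (h₀, e) ∉ interviews M ι κ := fun hV =>
    notMem_hProps_of_better (T := univ.map E) (by simp [hM]) (by simpa using fun j => hR j h₀)
      (by simpa [hM] using fun j => lastRank_lt (hE j)) (by simp) (mem_interviews.1 hV).1
  have hVW : ∀ j, (W j, E j) ∈ interviews M ι κ := fun j => by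
    have hp : E j ∈ hProps M ι (iRej M ι κ) (W j) :=
      mem_hProps_of_card_le (T := {E j}) (by simp [hM]) (hR j _) (by simp [hM, hW])
        (by simpa using hιW j)
    exact mem_interviews.2 ⟨hp, hkeep _ _ _ hp⟩
  have hSW : ∀ j, (E j, W j) ∉ mRej M (interviews M ι κ) := fun j =>
    notMem_mRej_of_forall_kept fun S hp => mem_hKeeps_of_forall_not_lt hp fun d' hd' => by
      obtain rfl : d' = E j := by simpa [hW] using rel_of_mem_interviews hd'
      exact lt_irrefl _
  have hμE : ∀ j, (E j, h₀) ∉ ikMatching M ι κ := fun j hμ =>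
    notMem_dProps_of_lt (hVW j) (hSW j) (by simp [hM, lastRank_lt (hW j)])
      (mem_ikMatching.1 hμ).1
  refine not_adequate_of_unmatched (d := e) (h := h₀) (by simp [hM]) (by simp [hM]) ?_ ?_
  · intro h hμ
    obtain rfl : h = h₀ := by simpa [hE'] using rel_of_mem_ikMatching hμ
    exact hVe (mem_interviews_of_mem_ikMatching hμ)
  · intro d hμ
    obtain rfl | ⟨j, rfl⟩ : d = e ∨ ∃ j, d = E j := by
      simpa [hW'] using rel_of_mem_ikMatching hμ
    exacts [hVe (mem_interviews_of_mem_ikMatching hμ), hμE j hμ]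

end Counterexamples

theorem exists_forall_ne_or_exists_pair_not {α : Type*} [Nonempty α] (p : α → Prop) :
    (∃ a₀, ∀ a, a ≠ a₀ → p a) ∨ ∃ a b, a ≠ b ∧ ¬ p a ∧ ¬ p b := by
  by_contra! h
  obtain ⟨a₀⟩ := ‹Nonempty α›
  obtain ⟨a, ha, hpa⟩ := h.1 a₀
  obtain ⟨b, hb, hpb⟩ := h.1 a
  exact hpb (h.2 a b hb.symm hpa)

theorem exists_embedding_fin_ne {α : Type*} [Fintype α] [DecidableEq α] (a : α) {k : ℕ}
    (hk : k < Fintype.card α) : ∃ f : Fin k ↪ α, ∀ j, f j ≠ a := by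
  obtain ⟨f⟩ := Function.Embedding.nonempty_of_card_le (α := Fin k) (β := {x // x ≠ a})
    (by simp [Fintype.card_subtype_compl]; omega)
  exact ⟨f.trans (Function.Embedding.subtype _), fun j => (f j).2⟩

namespace GloballyAdequate

variable {ι : H → ℕ} {κ : D → ℕ}

theorem adequate_ofRel (hga : GloballyAdequate D H ι κ) (A : D → H → Prop) (hLast : H)
    (dLast : D) : Adequate (Market.ofRel A hLast dLast) ι κ :=
  hga _ Market.ofRel_strict

theorem one_le_hospital_capacity [Nonempty D] (hga : GloballyAdequate D H ι κ) (h : H) :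
    1 ≤ ι h :=
  Nat.one_le_iff_ne_zero.2 fun hz => not_adequate_of_capacity_eq_zero
    (d₀ := Classical.arbitrary D) (Or.inl hz) (hga.adequate_ofRel _ _ _)

theorem one_le_doctor_capacity [Nonempty H] (hga : GloballyAdequate D H ι κ) (d : D) :
    1 ≤ κ d :=
  Nat.one_le_iff_ne_zero.2 fun hz => not_adequate_of_capacity_eq_zero
    (h₀ := Classical.arbitrary H) (Or.inr hz) (hga.adequate_ofRel _ _ _)

theorem not_intermediate_doctor_capacity (hga : GloballyAdequate D H ι κ) (d₀ : D) :
    ¬ (1 < κ d₀ ∧ κ d₀ < min (Fintype.card D) (Fintype.card H)) := by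
  rintro ⟨hk, hmin⟩
  obtain ⟨hkD, hkH⟩ := lt_min_iff.1 hmin
  have : Nonempty D := ⟨d₀⟩
  have : Nonempty H := Fintype.card_pos_iff.1 (by omega)
  rcases exists_forall_ne_or_exists_pair_not (2 ≤ ι ·) with ⟨h₀, hh₀⟩ | ⟨u, v, huv, hu, -⟩
  · obtain ⟨G, hG⟩ := exists_embedding_fin_ne h₀ hkH
    obtain ⟨E, hE⟩ := exists_embedding_fin_ne d₀ hkD
    exact not_adequate_of_wide_hospitals G E hG hE (fun j => hh₀ _ (hG j))
      (fun j => hga.one_le_doctor_capacity _) (hga.adequate_ofRel _ _ _)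
  · obtain ⟨e, he⟩ := Fintype.exists_ne_of_one_lt_card (by omega) d₀
    have := hga.one_le_hospital_capacity u
    exact not_adequate_of_two_unit_hospitals he huv hk (by omega)
      (hga.one_le_hospital_capacity v) (hga.adequate_ofRel _ _ _)

theorem not_intermediate_hospital_capacity (hga : GloballyAdequate D H ι κ) (h₀ : H) :
    ¬ (1 < ι h₀ ∧ ι h₀ < min (Fintype.card D) (Fintype.card H)) := by
  rintro ⟨hk, hmin⟩
  obtain ⟨hkD, hkH⟩ := lt_min_iff.1 hmin
  have : Nonempty H := ⟨h₀⟩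
  have : Nonempty D := Fintype.card_pos_iff.1 (by omega)
  rcases exists_forall_ne_or_exists_pair_not (2 ≤ κ ·) with ⟨e, he⟩ | ⟨u, v, huv, hu, -⟩
  · obtain ⟨E, hE⟩ := exists_embedding_fin_ne e hkD
    obtain ⟨W, hW⟩ := exists_embedding_fin_ne h₀ hkH
    exact not_adequate_of_wide_doctors E W hE hW (fun j => he _ (hE j))
      (fun j => hga.one_le_hospital_capacity _) (hga.adequate_ofRel _ _ _)
  · obtain ⟨e, he⟩ := Fintype.exists_ne_of_one_lt_card (by omega) h₀
    have := hga.one_le_doctor_capacity u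
    exact not_adequate_of_two_unit_doctors he huv hk (by omega)
      (hga.one_le_doctor_capacity v) (hga.adequate_ofRel _ _ _)

end GloballyAdequate

theorem globally_adequate_no_intermediate_capacity_general
    (ι : H → ℕ) (κ : D → ℕ) (hga : GloballyAdequate D H ι κ) :
    (∀ d : D, ¬ (1 < κ d ∧ κ d < min (Fintype.card D) (Fintype.card H))) ∧
    (∀ h : H, ¬ (1 < ι h ∧ ι h < min (Fintype.card D) (Fintype.card H))) :=
  ⟨hga.not_intermediate_doctor_capacity, hga.not_intermediate_hospital_capacity⟩

/-- If `(ι,κ)` is globally adequate, then no doctor has an intermediate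
interview capacity `1 < κ_d < min {|D|, |H|}`, and no hospital has an intermediate
interview capacity `1 < ι_h < min {|D|, |H|}`. -/
theorem globally_adequate_no_intermediate_capacity
    (hD : 2 ≤ Fintype.card D) (hH : 2 ≤ Fintype.card H)
    (ι : H → ℕ) (κ : D → ℕ) (hga : GloballyAdequate D H ι κ) :
    (∀ d : D, ¬ (1 < κ d ∧ κ d < min (Fintype.card D) (Fintype.card H))) ∧
    (∀ h : H, ¬ (1 < ι h ∧ ι h < min (Fintype.card D) (Fintype.card H))) :=
  globally_adequate_no_intermediate_capacity_general ι κ hga
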